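/- In the exchangeable Gaussian model X ~ N_m(θ1_m, Σ) with Σ = (1−ρ)I_m + ρ1_m1_mᵀ, 0 < ρ < 1, and marginal scores u_j(θ) = X_j − θ, the minimizer of Q_λ(θ*, w) has all coordinates equal: w*_{λ,j} = (1−λ)/(ρ(m−1)+1) for λ < 1 and w*_{λ,j} = 0 for λ ≥ 1, for every 1 ≤ j ≤ m. -/

import Mathlib

/-!
The covariance `Σ = (1 − ρ)I + ρJ` is positive semidefinite for `0 ≤ ρ ≤ 1`, so the lasso
objective is convex and its KKT conditions `|1 − (Σw)_j| ≤ λ`, `(1 − (Σw)_j) w_j = λ|w_j|` are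
sufficient for a global minimum. Since `Σ1 = (ρ(m − 1) + 1)1`, the constant vector `c1` has
`1 − (Σw)_j = 1 − c(ρ(m − 1) + 1)`, which equals `λ` for the stated `c` when `λ < 1`, and equals
`1 ≤ λ` for `c = 0` otherwise.
-/

section Lasso

open Matrix

variable {n : Type*} [Fintype n]

lemma Matrix.PosSemidef.dotProduct_mulVec_tangent_le {S : Matrix n n ℝ} (hS : S.PosSemidef)
    (v w : n → ℝ) : w ⬝ᵥ S *ᵥ w + 2 * ((S *ᵥ w) ⬝ᵥ (v - w)) ≤ v ⬝ᵥ S *ᵥ v := by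
  have hsymm : ∀ x y : n → ℝ, x ⬝ᵥ S *ᵥ y = y ⬝ᵥ S *ᵥ x := fun x y => by
    rw [dotProduct_mulVec, ← mulVec_transpose, ← conjTranspose_eq_transpose_of_trivial, hS.1,
      dotProduct_comm]
  have hnonneg := hS.dotProduct_mulVec_nonneg (v - w)
  simp only [star_trivial, mulVec_sub, sub_dotProduct, dotProduct_sub] at hnonneg ⊢
  rw [dotProduct_comm (S *ᵥ w), dotProduct_comm (S *ᵥ w), hsymm v w] at *
  linarith

noncomputable def lassoObjective (S : Matrix n n ℝ) (lam : ℝ) (w : n → ℝ) : ℝ :=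
  (1 / 2) * (w ⬝ᵥ S *ᵥ w) - ∑ j, w j + lam * ∑ j, |w j|

theorem lassoObjective_le_of_kkt {S : Matrix n n ℝ} (hS : S.PosSemidef) {lam : ℝ} {w : n → ℝ}
    (hbound : ∀ j, |1 - (S *ᵥ w) j| ≤ lam)
    (hcompl : ∀ j, (1 - (S *ᵥ w) j) * w j = lam * |w j|) (v : n → ℝ) :
    lassoObjective S lam w ≤ lassoObjective S lam v := by
  have htangent := hS.dotProduct_mulVec_tangent_le v w
  have hv : ∀ j, (1 - (S *ᵥ w) j) * v j ≤ lam * |v j| := fun j =>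
    (le_abs_self _).trans <| (abs_mul _ _).trans_le <|
      mul_le_mul_of_nonneg_right (hbound j) (abs_nonneg _)
  have hsum_v := Finset.sum_le_sum fun j (_ : j ∈ Finset.univ) => hv j
  have hsum_w := Finset.sum_congr rfl fun j (_ : j ∈ Finset.univ) => hcompl j
  simp only [dotProduct, Pi.sub_apply, sub_mul, mul_sub, Finset.sum_sub_distrib, one_mul,
    ← Finset.mul_sum] at htangent hsum_v hsum_w
  simp only [mul_comm ((S *ᵥ w) _)] at htangent hsum_v hsum_w
  unfold lassoObjective
  simp only [dotProduct] at htangent ⊢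
  linarith

end Lasso

section Exchangeable

open Matrix

variable {n : Type*} [Fintype n] [DecidableEq n]

def exchangeableCorr (ρ : ℝ) : Matrix n n ℝ := of fun j k => if j = k then 1 else ρ

lemma exchangeableCorr_mulVec_apply (ρ : ℝ) (w : n → ℝ) (j : n) :
    (exchangeableCorr ρ *ᵥ w) j = (1 - ρ) * w j + ρ * ∑ k, w k := by
  have hsplit : ∀ k, (if j = k then (1 : ℝ) else ρ) * w k =
      ρ * w k + if j = k then (1 - ρ) * w k else 0 := fun k => by split_ifs <;> ring
  simp only [exchangeableCorr, mulVec, dotProduct, of_apply, hsplit, Finset.sum_add_distrib,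
    Finset.sum_ite_eq, Finset.mem_univ, if_true, Finset.mul_sum]
  ring

lemma dotProduct_exchangeableCorr_mulVec (ρ : ℝ) (w : n → ℝ) :
    w ⬝ᵥ exchangeableCorr ρ *ᵥ w = (1 - ρ) * ∑ j, w j ^ 2 + ρ * (∑ j, w j) ^ 2 := by
  have hdiag : ∑ j, w j * ((1 - ρ) * w j) = (1 - ρ) * ∑ j, w j ^ 2 := by
    rw [Finset.mul_sum]; exact Finset.sum_congr rfl fun _ _ => by ring
  simp only [dotProduct, exchangeableCorr_mulVec_apply, mul_add, Finset.sum_add_distrib,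
    ← Finset.sum_mul, hdiag]
  ring

lemma exchangeableCorr_posSemidef {ρ : ℝ} (h₀ : 0 ≤ ρ) (h₁ : ρ ≤ 1) :
    (exchangeableCorr ρ : Matrix n n ℝ).PosSemidef := by
  refine .of_dotProduct_mulVec_nonneg ?_ fun w => ?_
  · ext j k
    simp only [conjTranspose_apply, star_trivial, exchangeableCorr, of_apply, eq_comm]
  · rw [star_trivial, dotProduct_exchangeableCorr_mulVec]
    have := Finset.sum_nonneg fun j (_ : j ∈ Finset.univ) => sq_nonneg (w j)
    positivity

lemma exchangeableCorr_mulVec_const (ρ c : ℝ) :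
    exchangeableCorr ρ *ᵥ (fun _ => c) = fun _ : n => c * (ρ * (Fintype.card n - 1) + 1) := by
  ext j
  simp only [exchangeableCorr_mulVec_apply, Finset.sum_const, Finset.card_univ, nsmul_eq_mul]
  ring

end Exchangeable

open Matrix in
theorem stmt_10_general {m : ℕ} (ρ lam : ℝ) (hρ : 0 < ρ) (hρ1 : ρ < 1)
    (hlam : 0 < lam)
    (S : Matrix (Fin m) (Fin m) ℝ)
    (hS : ∀ j k, S j k = if j = k then 1 else ρ)
    (Q : (Fin m → ℝ) → ℝ)
    (hQ : ∀ w, Q w = (1/2) * (w ⬝ᵥ S.mulVec w) - ∑ j, w j + lam * ∑ j, |w j|)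
    (wstar : Fin m → ℝ)
    (hws : ∀ j, wstar j = if lam < 1 then (1 - lam) / (ρ * ((m : ℝ) - 1) + 1) else 0) :
    ∀ v, Q wstar ≤ Q v := by
  obtain rfl : S = exchangeableCorr ρ := by ext j k; exact hS j k
  obtain rfl : Q = lassoObjective (exchangeableCorr ρ) lam := funext hQ
  have hden : 0 < ρ * ((m : ℝ) - 1) + 1 := by nlinarith [(m.cast_nonneg : (0 : ℝ) ≤ m)]
  set c := if lam < 1 then (1 - lam) / (ρ * ((m : ℝ) - 1) + 1) else 0
  obtain rfl : wstar = fun _ => c := funext hws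
  have hmul := exchangeableCorr_mulVec_const (n := Fin m) ρ c
  rw [Fintype.card_fin] at hmul
  refine lassoObjective_le_of_kkt (exchangeableCorr_posSemidef hρ.le hρ1.le)
    (fun _ => ?_) (fun _ => ?_) <;> simp only [hmul, c] <;> split_ifs with hl
  · rw [div_mul_cancel₀ _ hden.ne', sub_sub_cancel, abs_of_pos hlam]
  · rw [zero_mul, sub_zero, abs_one]
    exact not_lt.mp hl
  · rw [div_mul_cancel₀ _ hden.ne', sub_sub_cancel,
      abs_of_nonneg (div_nonneg (by linarith) hden.le)]
  · simp

open Matrix in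
/-- In the exchangeable Gaussian model the minimizer of the reduced criterion
(1/2)wᵀΣw − 1ᵀw + λ‖w‖₁ has all coordinates equal to (1−λ)/(ρ(m−1)+1) for λ < 1
and 0 for λ ≥ 1. -/
theorem stmt_10 {m : ℕ} (hm : 1 ≤ m) (ρ lam : ℝ) (hρ : 0 < ρ) (hρ1 : ρ < 1)
    (hlam : 0 < lam)
    (S : Matrix (Fin m) (Fin m) ℝ)
    (hS : ∀ j k, S j k = if j = k then 1 else ρ)
    (Q : (Fin m → ℝ) → ℝ)
    (hQ : ∀ w, Q w = (1/2) * (w ⬝ᵥ S.mulVec w) - ∑ j, w j + lam * ∑ j, |w j|)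
    (wstar : Fin m → ℝ)
    (hws : ∀ j, wstar j = if lam < 1 then (1 - lam) / (ρ * ((m : ℝ) - 1) + 1) else 0) :
    ∀ v, Q wstar ≤ Q v :=
  stmt_10_general ρ lam hρ hρ1 hlam S hS Q hQ wstar hws
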